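/- Let a = (a_1, a_2, …) be a sequence in which each a_m is the reciprocal of an odd integer at least 3, let S_a ⊂ ℝ² be the associated carpet with natural measure μ. For r > 0 let m(r) be the smallest integer m ≥ 0 with s_m ≤ r, and define h(r) = r² ∏_{j=1}^{m(r)} (1 − a_j²)^{−1}. Then there exist absolute constants 0 < c ≤ C (independent of a, x and r) such that for every x ∈ S_a and every 0 < r ≤ 1, c · h(r) ≤ μ(B(x,r)) ≤ C · h(r). -/

import Mathlib

open MeasureTheory Metric Set Filter
open scoped ENNReal NNReal Topology

noncomputable section

abbrev Plane : Type := EuclideanSpace ℝ (Fin 2)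

/-- `a` is a sequence of reciprocals of odd integers at least 3. -/
def GoodSeq (a : ℕ → ℝ) : Prop := ∀ m, ∃ k : ℕ, 1 ≤ k ∧ a m = ((2 * k + 1 : ℕ) : ℝ)⁻¹

/-- `sA a m` is the side length `s_m = a_1 ⋯ a_m` of the level `m` squares. -/
def sA (a : ℕ → ℝ) (m : ℕ) : ℝ := ∏ j ∈ Finset.range m, a j

/-- number of subdivisions of each side at step `m+1` (an odd integer `≥ 3`). -/
def nA (a : ℕ → ℝ) (m : ℕ) : ℕ := ⌊(a m)⁻¹⌋₊

/-- the axis-parallel closed square with lower-left corner `c` and side `s`. -/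
def csq (c : Plane) (s : ℝ) : Set Plane :=
  {p | p 0 ∈ Icc (c 0) (c 0 + s) ∧ p 1 ∈ Icc (c 1) (c 1 + s)}

/-- lower-left corners of the level `m` squares `𝒯_m` of the carpet construction. -/
def corners (a : ℕ → ℝ) : ℕ → Set Plane
  | 0 => {p | p 0 = 0 ∧ p 1 = 0}
  | m + 1 =>
      {p | ∃ c ∈ corners a m, ∃ i j : ℕ,
        i < nA a m ∧ j < nA a m ∧ ¬(i = (nA a m - 1) / 2 ∧ j = (nA a m - 1) / 2) ∧
        p 0 = c 0 + i * sA a (m + 1) ∧ p 1 = c 1 + j * sA a (m + 1)}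

/-- the level `m` precarpet `S_{a,m}`. -/
def precarpet (a : ℕ → ℝ) (m : ℕ) : Set Plane :=
  ⋃ c ∈ corners a m, csq c (sA a m)

/-- the carpet `S_a`. -/
def carpet (a : ℕ → ℝ) : Set Plane := ⋂ m, precarpet a m

/-- The natural measure on the carpet: the Borel probability measure giving each level `m`
square of the construction mass `∏_{j≤m} (a_j⁻² - 1)⁻¹`. -/
def IsNaturalMeasure (a : ℕ → ℝ) (μ : Measure ↥(carpet a)) : Prop :=
  IsProbabilityMeasure μ ∧
    ∀ m : ℕ, ∀ c ∈ corners a m,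
      μ (Subtype.val ⁻¹' csq c (sA a m)) =
        ENNReal.ofReal (∏ j ∈ Finset.range m, ((a j)⁻¹ ^ 2 - 1)⁻¹)

/-- `ρ` is an upper gradient of `u`: for every rectifiable curve (equivalently, every
`1`-Lipschitz parametrized curve) `γ : [0, L] → X`, `|u(γ L) - u(γ 0)| ≤ ∫_γ ρ ds`. -/
def IsUpperGradient {X : Type*} [MetricSpace X] (u : X → ℝ) (ρ : X → ℝ≥0∞) : Prop :=
  ∀ L : ℝ, 0 ≤ L → ∀ γ : ℝ → X, LipschitzOnWith 1 γ (Icc 0 L) →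
    ENNReal.ofReal |u (γ L) - u (γ 0)| ≤ ∫⁻ t in Icc 0 L, ρ (γ t)

/-- The metric measure space `(X, d, μ)` supports a `p`-Poincaré inequality. -/
def SupportsPoincare {X : Type*} [MetricSpace X] [MeasurableSpace X]
    (μ : Measure X) (p : ℝ) : Prop :=
  ∃ C : ℝ, 1 ≤ C ∧ ∃ lam : ℝ, 1 ≤ lam ∧
    ∀ u : X → ℝ, Continuous u → ∀ ρ : X → ℝ≥0∞, Measurable ρ → IsUpperGradient u ρ →
      ∀ x : X, ∀ r : ℝ, 0 < r →
        (∫⁻ y in ball x r, ENNReal.ofReal |u y - ⨍ z in ball x r, u z ∂μ| ∂μ) / μ (ball x r) ≤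
          ENNReal.ofReal (C * diam (ball x r)) *
            ((∫⁻ y in ball x (lam * r), ρ y ^ p ∂μ) / μ (ball x (lam * r))) ^ (1 / p)


/-- `mIndex a r` is `m(r)`, the smallest integer `m ≥ 0` with `s_m ≤ r`. -/
def mIndex (a : ℕ → ℝ) (r : ℝ) : ℕ := sInf {m : ℕ | sA a m ≤ r}

/-!
Let `m = m(r)`, so that `s_m ≤ r < s_{m-1}`; a level `m` square has mass
`s_m² ∏_{j<m} (1 - a_j²)⁻¹`. The ball meets only level `m` squares whose corners lie in a box of
side `2 r + s_m`, at most `(4 r / s_m)²` of them, which gives the upper bound. For the lower bound,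
if `r < 8 s_m` then a `k × k` corner block of level `m + 1` subsquares (`a_m = 1 / (2k + 1)`) of the
level `m` square containing `x` lies in the ball and carries at least `1/8` of its mass; otherwise
the level `m - 1` square containing `x` has at least `(r / 4 s_m)² - 1` non-central level `m`
subsquares inside the ball. Masses of distinct squares add up because they overlap in segments,
and segments are null: a line meets `O(1 / s_M)` level `M` squares, of total mass `O((3/8)^M)`.
-/

/-- `h(r) = r ^ 2 * weight a (mIndex a r)`. -/
def weight (a : ℕ → ℝ) (m : ℕ) : ℝ := ∏ j ∈ Finset.range m, (1 - a j ^ 2)⁻¹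

theorem sA_zero (a : ℕ → ℝ) : sA a 0 = 1 := Finset.prod_range_zero a

theorem sA_succ (a : ℕ → ℝ) (m : ℕ) : sA a (m + 1) = sA a m * a m :=
  Finset.prod_range_succ a m

theorem weight_succ (a : ℕ → ℝ) (m : ℕ) : weight a (m + 1) = weight a m * (1 - a m ^ 2)⁻¹ :=
  Finset.prod_range_succ _ m

theorem lt_sA_of_lt_mIndex {a : ℕ → ℝ} {r : ℝ} {k : ℕ} (hk : k < mIndex a r) : r < sA a k :=
  not_le.mp fun h => (Nat.sInf_le (s := {m | sA a m ≤ r}) h).not_gt hk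

namespace GoodSeq

variable {a : ℕ → ℝ}

theorem exists_nA_eq (ha : GoodSeq a) (m : ℕ) :
    ∃ k : ℕ, 1 ≤ k ∧ nA a m = 2 * k + 1 ∧ a m = ((2 * k + 1 : ℕ) : ℝ)⁻¹ := by
  obtain ⟨k, hk, hak⟩ := ha m
  exact ⟨k, hk, by rw [nA, hak, inv_inv, Nat.floor_natCast], hak⟩

theorem pos (ha : GoodSeq a) (m : ℕ) : 0 < a m := by
  obtain ⟨k, -, -, hak⟩ := ha.exists_nA_eq m
  rw [hak]
  positivity

theorem le_third (ha : GoodSeq a) (m : ℕ) : a m ≤ 3⁻¹ := by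
  obtain ⟨k, hk, -, hak⟩ := ha.exists_nA_eq m
  rw [hak]
  exact inv_anti₀ (by norm_num) (by exact_mod_cast (by omega : 3 ≤ 2 * k + 1))

theorem sq_lt_one (ha : GoodSeq a) (m : ℕ) : a m ^ 2 < 1 := by
  nlinarith [ha.pos m, ha.le_third m]

theorem sA_pos (ha : GoodSeq a) (m : ℕ) : 0 < sA a m :=
  Finset.prod_pos fun j _ => ha.pos j

theorem sA_eq_nA_mul (ha : GoodSeq a) (m : ℕ) : sA a m = nA a m * sA a (m + 1) := by
  obtain ⟨k, -, hn, hak⟩ := ha.exists_nA_eq m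
  rw [sA_succ, hn, hak]
  field_simp

theorem sA_le_pow (ha : GoodSeq a) (m : ℕ) : sA a m ≤ 3⁻¹ ^ m := by
  calc sA a m ≤ ∏ _j ∈ Finset.range m, (3 : ℝ)⁻¹ :=
        Finset.prod_le_prod (fun j _ => (ha.pos j).le) fun j _ => ha.le_third j
    _ = 3⁻¹ ^ m := by rw [Finset.prod_const, Finset.card_range]

theorem sA_le_one (ha : GoodSeq a) (m : ℕ) : sA a m ≤ 1 :=
  (ha.sA_le_pow m).trans (pow_le_one₀ (by norm_num) (by norm_num))

theorem sA_mIndex_le (ha : GoodSeq a) {r : ℝ} (hr : 0 < r) : sA a (mIndex a r) ≤ r := by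
  obtain ⟨n, hn⟩ := exists_pow_lt_of_lt_one hr (show (3 : ℝ)⁻¹ < 1 by norm_num)
  exact Nat.sInf_mem (s := {m | sA a m ≤ r}) ⟨n, (ha.sA_le_pow n).trans hn.le⟩

theorem weight_pos (ha : GoodSeq a) (m : ℕ) : 0 < weight a m :=
  Finset.prod_pos fun j _ => inv_pos.mpr (by linarith [ha.sq_lt_one j])

theorem weight_le_pow (ha : GoodSeq a) (m : ℕ) : weight a m ≤ (9 / 8) ^ m := by
  calc weight a m ≤ ∏ _j ∈ Finset.range m, (9 / 8 : ℝ) :=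
        Finset.prod_le_prod (fun j _ => (inv_pos.mpr (by linarith [ha.sq_lt_one j])).le)
          fun j _ => inv_le_of_inv_le₀ (by norm_num) (by nlinarith [ha.pos j, ha.le_third j])
    _ = (9 / 8) ^ m := by rw [Finset.prod_const, Finset.card_range]

theorem prod_inv_sq_sub_one_eq (ha : GoodSeq a) (m : ℕ) :
    ∏ j ∈ Finset.range m, ((a j)⁻¹ ^ 2 - 1)⁻¹ = sA a m ^ 2 * weight a m := by
  rw [weight, sA, ← Finset.prod_pow, ← Finset.prod_mul_distrib]
  refine Finset.prod_congr rfl fun j _ => ?_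
  have h1 := (ha.pos j).ne'
  have h2 : 1 - a j ^ 2 ≠ 0 := by linarith [ha.sq_lt_one j]
  field_simp

theorem sA_sq_mul_weight_le (ha : GoodSeq a) {m k : ℕ} (hk : 1 ≤ k)
    (hak : a m = ((2 * k + 1 : ℕ) : ℝ)⁻¹) :
    sA a m ^ 2 * weight a m ≤ 8 * (k * k * (sA a (m + 1) ^ 2 * weight a (m + 1))) := by
  have hk' : (1 : ℝ) ≤ k := by exact_mod_cast hk
  have hratio :
      (2 * k + 1 : ℝ)⁻¹ ^ 2 * (1 - (2 * k + 1 : ℝ)⁻¹ ^ 2)⁻¹ = (4 * (k : ℝ) * (k + 1))⁻¹ := by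
    rw [inv_pow, ← mul_inv, mul_sub, mul_one, mul_inv_cancel₀ (by positivity)]
    ring
  have hfactor : (1 : ℝ) ≤ 8 * (k * k * (4 * (k : ℝ) * (k + 1))⁻¹) := by
    rw [← div_eq_mul_inv, mul_div_assoc', le_div_iff₀ (by positivity)]
    nlinarith
  rw [sA_succ, weight_succ, hak]
  push_cast
  calc sA a m ^ 2 * weight a m
      ≤ 8 * (k * k * (4 * (k : ℝ) * (k + 1))⁻¹) * (sA a m ^ 2 * weight a m) :=
        le_mul_of_one_le_left (by positivity [ha.weight_pos m]) hfactor
    _ = _ := by rw [← hratio]; ring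

end GoodSeq

def gridPt (s : ℝ) (g : Fin 2 → ℕ) : Plane := WithLp.toLp 2 fun e => g e * s

@[simp] theorem gridPt_apply (s : ℝ) (g : Fin 2 → ℕ) (e : Fin 2) : gridPt s g e = g e * s := rfl

theorem mem_csq {p c : Plane} {s : ℝ} : p ∈ csq c s ↔ ∀ e, p e ∈ Icc (c e) (c e + s) := by
  rw [Fin.forall_fin_two]
  rfl

theorem isClosed_csq (c : Plane) (s : ℝ) : IsClosed (csq c s) := by
  simp only [csq, ofPred_and]
  exact (isClosed_Icc.preimage (PiLp.continuous_apply 2 _ 0)).inter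
    (isClosed_Icc.preimage (PiLp.continuous_apply 2 _ 1))

theorem csq_inter_csq_subset {u v : Plane} {s : ℝ} (e : Fin 2) (h : u e + s ≤ v e) :
    csq u s ∩ csq v s ⊆ {p | p e = v e} := by
  rintro p ⟨hu, hv⟩
  have hu := (mem_csq.mp hu e).2
  have hv := (mem_csq.mp hv e).1
  exact le_antisymm (by linarith) hv

theorem csq_subset_ball {c x : Plane} {s r : ℝ} (hr : 0 < r)
    (h : ∀ e, Icc (c e) (c e + s) ⊆ Icc (x e - r / 2) (x e + r / 2)) : csq c s ⊆ ball x r := by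
  intro p hp
  have hcoord : ∀ e, dist (p e) (x e) ^ 2 ≤ (r / 2) ^ 2 := fun e => by
    have := h e (mem_csq.mp hp e)
    rw [Real.dist_eq, sq_abs]
    nlinarith [this.1, this.2]
  rw [mem_ball, EuclideanSpace.dist_eq, Real.sqrt_lt' hr, Fin.sum_univ_two]
  nlinarith [hcoord 0, hcoord 1]

theorem add_gridPt_mem_corners_succ {a : ℕ → ℝ} {m : ℕ} {c : Plane} (hc : c ∈ corners a m)
    {g : Fin 2 → ℕ} (hg : ∀ e, g e < nA a m) (hctr : g ≠ fun _ => (nA a m - 1) / 2) :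
    c + gridPt (sA a (m + 1)) g ∈ corners a (m + 1) :=
  ⟨c, hc, g 0, g 1, hg 0, hg 1, fun h => hctr (funext (Fin.forall_fin_two.mpr h)),
    rfl, rfl⟩

theorem GoodSeq.exists_eq_gridPt {a : ℕ → ℝ} (ha : GoodSeq a) {m : ℕ} {c : Plane}
    (hc : c ∈ corners a m) : ∃ g, c = gridPt (sA a m) g := by
  induction m generalizing c with
  | zero => exact ⟨0, by ext e; fin_cases e <;> simp [hc.1, hc.2]⟩
  | succ m ih =>
    obtain ⟨c', hc', i, j, -, -, -, h0, h1⟩ := hc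
    obtain ⟨g, rfl⟩ := ih hc'
    refine ⟨fun e => nA a m * g e + ![i, j] e, ?_⟩
    ext e
    fin_cases e <;> simp [h0, h1, ha.sA_eq_nA_mul m] <;> ring

theorem sub_mem_Icc_of_mem_csq {p c : Plane} {s : ℝ} (hp : p ∈ csq c s) (e : Fin 2) :
    p e - c e ∈ Icc 0 s := by
  have := mem_csq.mp hp e
  exact ⟨by linarith [this.1], by linarith [this.2]⟩

theorem exists_corner_of_mem_carpet {a : ℕ → ℝ} {x : Plane} (hx : x ∈ carpet a) (m : ℕ) :
    ∃ c ∈ corners a m, x ∈ csq c (sA a m) := by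
  simpa [precarpet] using mem_iInter.mp hx m

theorem mem_Icc_of_mem_carpet {a : ℕ → ℝ} {x : Plane} (hx : x ∈ carpet a) (e : Fin 2) :
    x e ∈ Icc 0 1 := by
  obtain ⟨c, ⟨h0, h1⟩, hxc⟩ := exists_corner_of_mem_carpet hx 0
  have := mem_csq.mp hxc e
  fin_cases e <;> simpa [sA_zero, h0, h1] using this

open Finset in
theorem card_Icc_ceil_floor_le {a b : ℝ} (hab : a ≤ b) : (#(Icc ⌈a⌉₊ ⌊b⌋₊) : ℝ) ≤ b - a + 1 := by
  rw [Nat.card_Icc]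
  rcases le_total (⌊b⌋₊ + 1) ⌈a⌉₊ with h | h
  · rw [Nat.sub_eq_zero_of_le h]
    simp only [CharP.cast_eq_zero]
    linarith
  · rw [Nat.cast_sub h]
    push_cast
    rcases le_or_gt 0 a with ha | ha
    · linarith [Nat.floor_le (ha.trans hab), Nat.le_ceil a]
    · rw [Nat.ceil_eq_zero.mpr ha.le]
      rcases le_or_gt 0 b with hb | hb
      · linarith [Nat.floor_le hb]
      · rw [Nat.floor_eq_zero.mpr (hb.trans one_pos)]
        linarith

open Finset in
theorem sub_two_le_card_Ico_ceil_floor {a b : ℝ} (ha : 0 ≤ a) :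
    b - a - 2 ≤ (#(Ico ⌈a⌉₊ ⌊b⌋₊) : ℝ) := by
  rw [Nat.card_Ico]
  have hb := Nat.lt_floor_add_one b
  have ha' := Nat.ceil_lt_add_one ha
  rcases le_total ⌈a⌉₊ ⌊b⌋₊ with h | h
  · rw [Nat.cast_sub h]
    linarith
  · have : (⌊b⌋₊ : ℝ) ≤ ⌈a⌉₊ := by exact_mod_cast h
    rw [Nat.sub_eq_zero_of_le h]
    push_cast
    linarith

theorem Icc_mul_subset_of_mem_Ico {lo hi s : ℝ} (hs : 0 < s) {i : ℕ}
    (hmem : i ∈ Finset.Ico ⌈lo / s⌉₊ ⌊hi / s⌋₊) : Icc (i * s) (i * s + s) ⊆ Icc lo hi := by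
  rw [Finset.mem_Ico, Nat.ceil_le, ← Nat.add_one_le_iff, Nat.le_floor_iff' (by omega),
    div_le_iff₀ hs, le_div_iff₀ hs] at hmem
  push_cast at hmem
  exact Icc_subset_Icc hmem.1 (by linarith [hmem.2])

theorem exists_cells_subset_Icc {s u ρ : ℝ} {n : ℕ} (hs : 0 < s) (hu : u ∈ Icc 0 (n * s))
    (hρn : 2 * ρ ≤ n * s) (hρs : 4 * s ≤ ρ) :
    ∃ A : Finset ℕ, ρ / (2 * s) ≤ A.card ∧
      ∀ i ∈ A, i < n ∧ Icc (i * s) (i * s + s) ⊆ Icc (u - ρ) (u + ρ) := by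
  set lo := min u (n * s - ρ)
  have hlo : 0 ≤ lo := le_min hu.1 (by linarith)
  have hsub : Icc lo (lo + ρ) ⊆ Icc (u - ρ) (u + ρ) ∩ Icc 0 (n * s) := by
    have := min_le_left u (n * s - ρ)
    have := min_le_right u (n * s - ρ)
    have : u - ρ ≤ lo := le_min (by linarith) (by linarith [hu.2])
    exact subset_inter (Icc_subset_Icc (by linarith) (by linarith))
      (Icc_subset_Icc hlo (by linarith))
  refine ⟨Finset.Ico ⌈lo / s⌉₊ ⌊(lo + ρ) / s⌋₊, ?_, fun i hi => ?_⟩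
  · have := sub_two_le_card_Ico_ceil_floor (b := (lo + ρ) / s) (div_nonneg hlo hs.le)
    have e : (lo + ρ) / s - lo / s = ρ / s := by ring
    have : 2 ≤ ρ / (2 * s) := by rw [le_div_iff₀ (by positivity)]; linarith
    have : ρ / s = 2 * (ρ / (2 * s)) := by field_simp
    linarith
  · have hcell := (Icc_mul_subset_of_mem_Ico hs hi).trans hsub
    have hend := (hcell (right_mem_Icc.mpr (by linarith))).2.2
    refine ⟨?_, hcell.trans inter_subset_left⟩
    have : ((i + 1 : ℕ) : ℝ) * s ≤ n * s := by push_cast; linarith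
    exact Nat.lt_iff_add_one_le.mpr (by exact_mod_cast le_of_mul_le_mul_right this hs)

theorem exists_half_cells_subset_Icc {s u ρ : ℝ} {k : ℕ} (hs : 0 < s)
    (hu : u ∈ Icc 0 ((2 * k + 1 : ℕ) * s)) (hρ : ((2 * k + 1 : ℕ) : ℝ) * s ≤ 2 * ρ) :
    ∃ A : Finset ℕ, A.card = k ∧ k ∉ A ∧
      ∀ i ∈ A, i < 2 * k + 1 ∧ Icc (i * s) (i * s + s) ⊆ Icc (u - ρ) (u + ρ) := by
  push_cast at hu hρ
  obtain ⟨b, hb, hsub⟩ : ∃ b : ℕ, (b = 0 ∨ b = k + 1) ∧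
      Icc (b * s) ((b + k) * s) ⊆ Icc (u - ρ) (u + ρ) := by
    rcases le_or_gt (2 * u) ((2 * k + 1) * s) with h | h
    · exact ⟨0, Or.inl rfl, Icc_subset_Icc (by push_cast; linarith [hu.1])
        (by push_cast; linarith [hu.1])⟩
    · exact ⟨k + 1, Or.inr rfl, Icc_subset_Icc (by push_cast; linarith [hu.2])
        (by push_cast; linarith [hu.2])⟩
  refine ⟨Finset.Ico b (b + k), by simp, by rcases hb with rfl | rfl <;> simp, fun i hi => ?_⟩
  rw [Finset.mem_Ico] at hi
  have h1 : (b : ℝ) ≤ i := by exact_mod_cast hi.1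
  have h2 : (i : ℝ) + 1 ≤ b + k := by exact_mod_cast hi.2
  refine ⟨by rcases hb with rfl | rfl <;> omega, (Icc_subset_Icc ?_ ?_).trans hsub⟩ <;> nlinarith

namespace IsNaturalMeasure

open Finset

variable {a : ℕ → ℝ} {μ : Measure ↥(carpet a)}

theorem measure_csq (hμ : IsNaturalMeasure a μ) (ha : GoodSeq a) {m : ℕ} {c : Plane}
    (hc : c ∈ corners a m) :
    μ (Subtype.val ⁻¹' csq c (sA a m)) = ENNReal.ofReal (sA a m ^ 2 * weight a m) := by
  rw [hμ.2 m c hc, ha.prod_inv_sq_sub_one_eq]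

theorem measure_le_card_mul (hμ : IsNaturalMeasure a μ) (ha : GoodSeq a) (m : ℕ)
    {S : Set Plane} (G : Finset (Fin 2 → ℕ))
    (hS : ∀ c ∈ corners a m, ∀ y ∈ S ∩ carpet a, y ∈ csq c (sA a m) →
      ∃ g ∈ G, c = gridPt (sA a m) g) :
    μ (Subtype.val ⁻¹' S) ≤ #G * ENNReal.ofReal (sA a m ^ 2 * weight a m) := by
  classical
  set s := sA a m
  set G' := G.filter fun g => gridPt s g ∈ corners a m
  have hcover :
      (Subtype.val ⁻¹' S : Set (carpet a)) ⊆ ⋃ g ∈ G', Subtype.val ⁻¹' csq (gridPt s g) s := by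
    intro y hy
    obtain ⟨c, hc, hyc⟩ := exists_corner_of_mem_carpet y.2 m
    obtain ⟨g, hg, rfl⟩ := hS c hc y ⟨hy, y.2⟩ hyc
    exact mem_biUnion (mem_filter.mpr ⟨hg, hc⟩) hyc
  calc μ (Subtype.val ⁻¹' S)
      ≤ ∑ g ∈ G', μ (Subtype.val ⁻¹' csq (gridPt s g) s) :=
        (measure_mono hcover).trans (measure_biUnion_finset_le _ _)
    _ = #G' * ENNReal.ofReal (s ^ 2 * weight a m) := by
        rw [sum_congr rfl fun g hg => hμ.measure_csq ha (mem_filter.mp hg).2, sum_const,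
          nsmul_eq_mul]
    _ ≤ #G * ENNReal.ofReal (s ^ 2 * weight a m) := by
        gcongr
        exact filter_subset _ _

/-- `∏ ((hi e - lo e) / s_m + 1)` bounds the number of level `m` corners in the box. -/
theorem measure_le_of_corner_mem_Icc (hμ : IsNaturalMeasure a μ) (ha : GoodSeq a) (m : ℕ)
    {S : Set Plane} {lo hi : Fin 2 → ℝ} (hlohi : ∀ e, lo e ≤ hi e)
    (hS : ∀ c ∈ corners a m, ∀ y ∈ S ∩ carpet a, y ∈ csq c (sA a m) →
      ∀ e, c e ∈ Icc (lo e) (hi e)) :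
    μ (Subtype.val ⁻¹' S) ≤
      ENNReal.ofReal ((∏ e, ((hi e - lo e) / sA a m + 1)) * (sA a m ^ 2 * weight a m)) := by
  set s := sA a m
  have hs := ha.sA_pos m
  set G := Fintype.piFinset fun e => Icc ⌈lo e / s⌉₊ ⌊hi e / s⌋₊
  have hG : ∀ c ∈ corners a m, ∀ y ∈ S ∩ carpet a, y ∈ csq c s → ∃ g ∈ G, c = gridPt s g := by
    intro c hc y hy hyc
    obtain ⟨g, rfl⟩ := ha.exists_eq_gridPt hc
    refine ⟨g, Fintype.mem_piFinset.mpr fun e => ?_, rfl⟩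
    have := hS _ hc y hy hyc e
    simp only [gridPt_apply] at this
    exact Finset.mem_Icc.mpr
      ⟨Nat.ceil_le.mpr ((div_le_iff₀ hs).mpr this.1), Nat.le_floor ((le_div_iff₀ hs).mpr this.2)⟩
  have hcard : (#G : ℝ) ≤ ∏ e, ((hi e - lo e) / s + 1) := by
    rw [Fintype.card_piFinset, Nat.cast_prod]
    refine prod_le_prod (fun _ _ => Nat.cast_nonneg _) fun e _ => ?_
    rw [sub_div]
    exact card_Icc_ceil_floor_le (div_le_div_of_nonneg_right (hlohi e) hs.le)
  calc μ (Subtype.val ⁻¹' S) ≤ #G * ENNReal.ofReal (s ^ 2 * weight a m) :=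
        hμ.measure_le_card_mul ha m G hG
    _ ≤ _ := by
        rw [← ENNReal.ofReal_natCast, ← ENNReal.ofReal_mul (Nat.cast_nonneg _)]
        exact ENNReal.ofReal_le_ofReal
          (mul_le_mul_of_nonneg_right hcard (by positivity [ha.weight_pos m]))

theorem measure_coord_eq_le (hμ : IsNaturalMeasure a μ) (ha : GoodSeq a) (e : Fin 2) (t : ℝ)
    (M : ℕ) : μ (Subtype.val ⁻¹' {p : Plane | p e = t}) ≤ ENNReal.ofReal (4 * (3 / 8) ^ M) := by
  set s := sA a M
  have hs : 0 < s := ha.sA_pos M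
  set lo : Fin 2 → ℝ := fun e' => if e' = e then t - s else 0
  set hi : Fin 2 → ℝ := fun e' => if e' = e then t else 1
  refine (hμ.measure_le_of_corner_mem_Icc ha M (lo := lo) (hi := hi) (fun e' => ?_) ?_).trans
    (ENNReal.ofReal_le_ofReal ?_)
  · simp only [lo, hi]
    split_ifs <;> linarith
  · rintro c hc y ⟨hyt, hy⟩ hyc e'
    obtain ⟨g, rfl⟩ := ha.exists_eq_gridPt hc
    have hyc' := mem_csq.mp hyc e'
    simp only [lo, hi]
    split_ifs with h
    · subst h
      exact ⟨by linarith [hyc'.2, hyt.symm.le], hyt ▸ hyc'.1⟩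
    · exact ⟨by simp only [gridPt_apply]; positivity,
        hyc'.1.trans (mem_Icc_of_mem_carpet hy e').2⟩
  · have hprod : ∏ e', ((hi e' - lo e') / s + 1) = 2 * (1 / s + 1) := by
      rw [Fin.prod_univ_two]
      fin_cases e <;> simp only [lo, hi] <;> norm_num
      · rw [div_self hs.ne']; norm_num
      · rw [div_self hs.ne']; ring
    have hw := ha.weight_pos M
    calc (∏ e', ((hi e' - lo e') / s + 1)) * (s ^ 2 * weight a M)
        = 2 * (1 + s) * s * weight a M := by rw [hprod]; field_simp
      _ ≤ 4 * s * weight a M := by nlinarith [mul_pos hs hw, show s ≤ 1 from ha.sA_le_one M]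
      _ ≤ 4 * 3⁻¹ ^ M * (9 / 8) ^ M := by
          gcongr
          exacts [ha.sA_le_pow M, ha.weight_le_pow M]
      _ = 4 * (3 / 8) ^ M := by rw [mul_assoc, ← mul_pow]; norm_num

theorem measure_coord_eq_eq_zero (hμ : IsNaturalMeasure a μ) (ha : GoodSeq a) (e : Fin 2)
    (t : ℝ) : μ (Subtype.val ⁻¹' {p : Plane | p e = t}) = 0 := by
  have hlim : Tendsto (fun M : ℕ => ENNReal.ofReal (4 * (3 / 8 : ℝ) ^ M)) atTop (𝓝 0) := by
    simpa using ENNReal.tendsto_ofReal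
      ((tendsto_pow_atTop_nhds_zero_of_lt_one (by norm_num) (by norm_num)).const_mul 4)
  exact le_antisymm (ge_of_tendsto' hlim (hμ.measure_coord_eq_le ha e t)) bot_le

/-- Distinct level `m` squares overlap only in a segment, which is `μ`-null, so their masses add
up inside `B`. -/
theorem card_mul_le_measure (hμ : IsNaturalMeasure a μ) (ha : GoodSeq a) {m : ℕ} {c₀ : Plane}
    {B : Set Plane} (F : Finset (Fin 2 → ℕ))
    (hF : ∀ g ∈ F, c₀ + gridPt (sA a m) g ∈ corners a m)
    (hB : ∀ g ∈ F, csq (c₀ + gridPt (sA a m) g) (sA a m) ⊆ B) :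
    #F * ENNReal.ofReal (sA a m ^ 2 * weight a m) ≤ μ (Subtype.val ⁻¹' B) := by
  set s := sA a m
  set Q : (Fin 2 → ℕ) → Set (carpet a) := fun g => Subtype.val ⁻¹' csq (c₀ + gridPt s g) s
  have hsep : ∀ g g' e, g e < g' e → μ (Q g ∩ Q g') = 0 := by
    intro g g' e h
    refine measure_mono_null (fun y hy => ?_)
      (hμ.measure_coord_eq_eq_zero ha e ((c₀ + gridPt s g') e))
    refine csq_inter_csq_subset e ?_ hy
    have : (g e : ℝ) + 1 ≤ g' e := by exact_mod_cast h
    simp only [PiLp.add_apply, gridPt_apply]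
    nlinarith [ha.sA_pos m]
  have hdisj : (F : Set (Fin 2 → ℕ)).Pairwise (Function.onFun (AEDisjoint μ) Q) := by
    intro g _ g' _ hne
    obtain ⟨e, he⟩ := Function.ne_iff.mp hne
    rcases he.lt_or_gt with h | h
    · exact hsep g g' e h
    · show μ (Q g ∩ Q g') = 0
      rw [inter_comm]
      exact hsep g' g e h
  calc #F * ENNReal.ofReal (s ^ 2 * weight a m) = ∑ g ∈ F, μ (Q g) := by
        rw [sum_congr rfl fun g hg => hμ.measure_csq ha (hF g hg), sum_const, nsmul_eq_mul]
    _ = μ (⋃ g ∈ F, Q g) := (measure_biUnion_finset₀ hdisj fun g _ =>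
        (measurable_subtype_coe (isClosed_csq _ _).measurableSet).nullMeasurableSet).symm
    _ ≤ μ (Subtype.val ⁻¹' B) := measure_mono (iUnion₂_subset fun g hg => preimage_mono (hB g hg))

/-- The erased index vector is that of the central subsquare, removed by the construction. -/
theorem card_erase_mul_le_measure_ball (hμ : IsNaturalMeasure a μ) (ha : GoodSeq a) {ℓ : ℕ}
    {c₀ : Plane} (hc₀ : c₀ ∈ corners a ℓ) (x : carpet a) {r : ℝ} (hr : 0 < r)
    (A : Fin 2 → Finset ℕ)
    (hA : ∀ e, ∀ i ∈ A e, i < nA a ℓ ∧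
      Icc (i * sA a (ℓ + 1)) (i * sA a (ℓ + 1) + sA a (ℓ + 1)) ⊆
        Icc ((x : Plane) e - c₀ e - r / 2) ((x : Plane) e - c₀ e + r / 2)) :
    #((Fintype.piFinset A).erase fun _ => (nA a ℓ - 1) / 2) *
        ENNReal.ofReal (sA a (ℓ + 1) ^ 2 * weight a (ℓ + 1)) ≤ μ (ball x r) := by
  refine hμ.card_mul_le_measure ha (c₀ := c₀) (B := ball (x : Plane) r) _ (fun g hg => ?_)
    fun g hg => ?_ <;> have hg' := Fintype.mem_piFinset.mp (mem_of_mem_erase hg)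
  · exact add_gridPt_mem_corners_succ hc₀ (fun e => (hA e _ (hg' e)).1) (ne_of_mem_erase hg)
  · refine csq_subset_ball hr fun e z hz => ?_
    simp only [PiLp.add_apply, gridPt_apply] at hz
    have := (hA e _ (hg' e)).2 (show z - c₀ e ∈ _ from ⟨by linarith [hz.1], by linarith [hz.2]⟩)
    exact ⟨by linarith [this.1], by linarith [this.2]⟩

theorem measure_ball_le (hμ : IsNaturalMeasure a μ) (ha : GoodSeq a) (x : carpet a) {m : ℕ}
    {r : ℝ} (hsr : sA a m ≤ r) : μ (ball x r) ≤ ENNReal.ofReal (16 * (r ^ 2 * weight a m)) := by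
  set s := sA a m
  have hs : 0 < s := ha.sA_pos m
  refine (hμ.measure_le_of_corner_mem_Icc ha m (S := ball (x : Plane) r)
    (lo := fun e => (x : Plane) e - r - s) (hi := fun e => (x : Plane) e + r)
    (fun e => by linarith) ?_).trans (ENNReal.ofReal_le_ofReal ?_)
  · rintro c - y ⟨hyx, -⟩ hyc e
    have hd := abs_lt.mp ((PiLp.dist_apply_le y x e).trans_lt (mem_ball.mp hyx))
    have hye := mem_csq.mp hyc e
    exact ⟨by linarith [hye.2, hd.1], by linarith [hye.1, hd.2]⟩
  · have hfactor : ∀ u : ℝ, (u + r - (u - r - s)) / s + 1 = (2 * r + 2 * s) / s := fun u => by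
      field_simp
      ring
    rw [Fin.prod_univ_two, hfactor, hfactor]
    have hw := ha.weight_pos m
    calc (2 * r + 2 * s) / s * ((2 * r + 2 * s) / s) * (s ^ 2 * weight a m)
        = (2 * r + 2 * s) ^ 2 * weight a m := by field_simp
      _ ≤ (4 * r) ^ 2 * weight a m := by gcongr <;> linarith
      _ = 16 * (r ^ 2 * weight a m) := by ring

theorem measure_ball_ge_of_lt_eight_mul (hμ : IsNaturalMeasure a μ) (ha : GoodSeq a) (x : carpet a)
    {m : ℕ} {r : ℝ} (hsr : sA a m ≤ r) (hr8 : r < 8 * sA a m) :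
    ENNReal.ofReal (512⁻¹ * (r ^ 2 * weight a m)) ≤ μ (ball x r) := by
  obtain ⟨c₀, hc₀, hxc⟩ := exists_corner_of_mem_carpet x.2 m
  obtain ⟨k, hk, hn, hak⟩ := ha.exists_nA_eq m
  set s := sA a (m + 1)
  have hs : 0 < s := ha.sA_pos (m + 1)
  have hL : sA a m = ((2 * k + 1 : ℕ) : ℝ) * s := by rw [ha.sA_eq_nA_mul m, hn]
  choose A hAcard hAk hA using fun e => exists_half_cells_subset_Icc (ρ := r / 2) hs
    (hL ▸ sub_mem_Icc_of_mem_csq hxc e) (by rw [← hL]; linarith)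
  have hctr : (fun _ => (nA a m - 1) / 2 : Fin 2 → ℕ) ∉ Fintype.piFinset A := fun h =>
    hAk 0 (by simpa [hn] using Fintype.mem_piFinset.mp h 0)
  have hsub := hμ.card_erase_mul_le_measure_ball ha hc₀ x (r := r) (by linarith [ha.sA_pos m]) A
    fun e i hi => by rw [hn]; exact hA e i hi
  rw [Finset.erase_eq_of_notMem hctr, Fintype.card_piFinset, Fin.prod_univ_two, hAcard,
    hAcard] at hsub
  refine le_trans ?_ hsub
  rw [← ENNReal.ofReal_natCast, ← ENNReal.ofReal_mul (Nat.cast_nonneg _)]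
  refine ENNReal.ofReal_le_ofReal ?_
  have hw := ha.weight_pos m
  calc 512⁻¹ * (r ^ 2 * weight a m) ≤ 8⁻¹ * (sA a m ^ 2 * weight a m) := by
        have : r ^ 2 ≤ 64 * sA a m ^ 2 := by nlinarith
        nlinarith
    _ ≤ _ := by
        have := ha.sA_sq_mul_weight_le hk hak
        push_cast
        linarith

theorem measure_ball_ge_of_eight_mul_le (hμ : IsNaturalMeasure a μ) (ha : GoodSeq a) (x : carpet a)
    {ℓ : ℕ} {r : ℝ} (hr8 : 8 * sA a (ℓ + 1) ≤ r) (hrs : r ≤ sA a ℓ) :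
    ENNReal.ofReal (512⁻¹ * (r ^ 2 * weight a (ℓ + 1))) ≤ μ (ball x r) := by
  obtain ⟨c₀, hc₀, hxc⟩ := exists_corner_of_mem_carpet x.2 ℓ
  set s := sA a (ℓ + 1)
  have hs : 0 < s := ha.sA_pos (ℓ + 1)
  have hL : sA a ℓ = nA a ℓ * s := ha.sA_eq_nA_mul ℓ
  choose A hAcard hA using fun e => exists_cells_subset_Icc (ρ := r / 2) (n := nA a ℓ) hs
    (hL ▸ sub_mem_Icc_of_mem_csq hxc e) (by rw [← hL]; linarith)
    (by linarith)
  refine le_trans ?_ (hμ.card_erase_mul_le_measure_ball ha hc₀ x (r := r) (by linarith) A hA)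
  set w := r / 2 / (2 * s)
  have hw2 : 2 ≤ w := by rw [le_div_iff₀ (by positivity)]; linarith
  set F := (Fintype.piFinset A).erase fun _ => (nA a ℓ - 1) / 2
  have hcard : w * w - 1 ≤ #F := by
    have hnat := Nat.sub_le_iff_le_add.mp (pred_card_le_card_erase (s := Fintype.piFinset A)
      (a := fun _ => (nA a ℓ - 1) / 2))
    rw [Fintype.card_piFinset, Fin.prod_univ_two] at hnat
    have : ((#(A 0) * #(A 1) : ℕ) : ℝ) ≤ (#F + 1 : ℕ) := by exact_mod_cast hnat
    push_cast at this
    nlinarith [hAcard 0, hAcard 1]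
  rw [← ENNReal.ofReal_natCast, ← ENNReal.ofReal_mul (Nat.cast_nonneg _)]
  refine ENNReal.ofReal_le_ofReal ?_
  have hW := ha.weight_pos (ℓ + 1)
  have hws : w * w * s ^ 2 = r ^ 2 / 16 := by simp only [w]; field_simp; ring
  have hww : 3 / 4 * (w * w) ≤ w * w - 1 := by nlinarith
  calc 512⁻¹ * (r ^ 2 * weight a (ℓ + 1)) ≤ 3 / 4 * (w * w * s ^ 2) * weight a (ℓ + 1) := by
        rw [hws]
        nlinarith [mul_nonneg (sq_nonneg r) hW.le]
    _ ≤ (w * w - 1) * (s ^ 2 * weight a (ℓ + 1)) := by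
        nlinarith [mul_pos (pow_pos hs 2) hW]
    _ ≤ _ := by gcongr

theorem measure_ball_ge (hμ : IsNaturalMeasure a μ) (ha : GoodSeq a) (x : carpet a) {r : ℝ}
    (hr : 0 < r) (hr1 : r ≤ 1) :
    ENNReal.ofReal (512⁻¹ * (r ^ 2 * weight a (mIndex a r))) ≤ μ (ball x r) := by
  have hsr := ha.sA_mIndex_le hr
  rcases lt_or_ge r (8 * sA a (mIndex a r)) with h | h
  · exact hμ.measure_ball_ge_of_lt_eight_mul ha x hsr h
  · obtain ⟨ℓ, hℓ⟩ : ∃ ℓ, mIndex a r = ℓ + 1 := Nat.exists_eq_succ_of_ne_zero fun h0 => by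
      rw [h0, sA_zero] at h
      linarith
    rw [hℓ] at h ⊢
    exact hμ.measure_ball_ge_of_eight_mul_le ha x h (lt_sA_of_lt_mIndex (by omega)).le

end IsNaturalMeasure

/-- For every `x ∈ S_a` and `0 < r ≤ 1`, `μ(B(x,r)) ≍ h(r) := r² ∏_{j=1}^{m(r)} (1-a_j²)⁻¹`,
with absolute comparison constants independent of `a`, `x` and `r`. -/
theorem carpet_measure_ball_comparable :
    ∃ c C : ℝ, 0 < c ∧ c ≤ C ∧
      ∀ a : ℕ → ℝ, GoodSeq a → ∀ μ : Measure ↥(carpet a), IsNaturalMeasure a μ →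
        ∀ x : ↥(carpet a), ∀ r : ℝ, 0 < r → r ≤ 1 →
          ENNReal.ofReal
              (c * (r ^ 2 * ∏ j ∈ Finset.range (mIndex a r), (1 - (a j) ^ 2)⁻¹)) ≤
            μ (ball x r) ∧
          μ (ball x r) ≤
            ENNReal.ofReal
              (C * (r ^ 2 * ∏ j ∈ Finset.range (mIndex a r), (1 - (a j) ^ 2)⁻¹)) :=
  ⟨512⁻¹, 16, by norm_num, by norm_num, fun _ ha _ hμ x _ hr hr1 =>
    ⟨hμ.measure_ball_ge ha x hr hr1, hμ.measure_ball_le ha x (ha.sA_mIndex_le hr)⟩⟩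

end
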